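/- Let g₂ : ℂ² → ℂ² be the polynomial map g₂(p,q) = (4p + p² − 4q, 12p² − 8q − 6pq + 2q² − p³), let C_C = {(p,q) ∈ ℂ² : p³ = q²}, and let E = {(0,0), (1,−1), (9,27)}. Then: (1) for every (a,b) ∈ C_C \ E, the fiber g₂⁻¹(a,b) has exactly 3 elements, of which exactly two lie on C_C and the remaining one lies on the line {(p,q) : 3p − q − 4 = 0}; (2) for every (a,b) ∈ E, the fiber g₂⁻¹(a,b) has exactly 2 elements. -/

import Mathlib

/-!
Every point of the cusp `p³ = q²` is `(s², s³)`, and `g2 (t², t³) = (u², u³)` with `u = t² - 2t`: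
on the cusp `g2` is the degree-2 map `t ↦ t² - 2t`, giving the two cusp points `t = 1 ± r`, `r² = 1 + s`,
over `(s², s³)`. Since the first coordinate of `g2` is linear in `q`, the fiber is cut out by a quartic
in `p`, which factors as `(p - (4 - s))² (p - (1 + r)²) (p - (1 - r)²)`; the double root is the point
`(4 - s, 8 - 3s)` on the line `3p - q = 4`, which lies off the cusp unless `s ∈ {0, 3}`. The three
points are distinct exactly when `s ∉ {0, -1, 3}`, i.e. when `(s², s³) ∉ E`.
-/

/-- The degree-2 Chebyshev morphism on ℂ²/D₃ ≅ ℂ². -/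
noncomputable def g2 (pq : ℂ × ℂ) : ℂ × ℂ :=
  (4 * pq.1 + pq.1 ^ 2 - 4 * pq.2,
   12 * pq.1 ^ 2 - 8 * pq.2 - 6 * pq.1 * pq.2 + 2 * pq.2 ^ 2 - pq.1 ^ 3)

def cuspidalCubic (M : Type*) [Monoid M] : Set (M × M) := {pq | pq.1 ^ 3 = pq.2 ^ 2}

@[simp]
lemma mem_cuspidalCubic {M : Type*} [Monoid M] {pq : M × M} :
    pq ∈ cuspidalCubic M ↔ pq.1 ^ 3 = pq.2 ^ 2 :=
  Iff.rfl

lemma exists_sq_eq_and_cube_eq {K : Type*} [Field K] {a b : K} (h : a ^ 3 = b ^ 2) :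
    ∃ s : K, s ^ 2 = a ∧ s ^ 3 = b := by
  rcases eq_or_ne a 0 with rfl | ha
  · obtain rfl : b = 0 := by simpa using h.symm
    exact ⟨0, by simp, by simp⟩
  refine ⟨b / a, ?_, ?_⟩
  · rw [div_pow, div_eq_iff (pow_ne_zero 2 ha)]; linear_combination -h
  · rw [div_pow, div_eq_iff (pow_ne_zero 3 ha)]; linear_combination -b * h

lemma g2_sq_cube (t : ℂ) : g2 (t ^ 2, t ^ 3) = ((t ^ 2 - 2 * t) ^ 2, (t ^ 2 - 2 * t) ^ 3) := by
  simp only [g2, Prod.mk.injEq]; constructor <;> ring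

lemma g2_four_sub (s : ℂ) : g2 (4 - s, 8 - 3 * s) = (s ^ 2, s ^ 3) := by
  simp only [g2, Prod.mk.injEq]; constructor <;> ring

lemma g2_preimage_sq_cube {s r : ℂ} (hr : r ^ 2 = 1 + s) :
    g2 ⁻¹' {(s ^ 2, s ^ 3)} =
      {(4 - s, 8 - 3 * s), ((1 + r) ^ 2, (1 + r) ^ 3), ((1 - r) ^ 2, (1 - r) ^ 3)} := by
  ext ⟨p, q⟩
  simp only [Set.mem_preimage, Set.mem_singleton_iff, Set.mem_insert_iff]
  constructor
  · intro h
    obtain ⟨h1, h2⟩ := Prod.ext_iff.1 h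
    simp only [g2] at h1 h2
    obtain rfl : q = (p ^ 2 + 4 * p - s ^ 2) / 4 := by linear_combination (-1 / 4 : ℂ) * h1
    have hfactor : (p - (4 - s)) ^ 2 * (p - (1 + r) ^ 2) * (p - (1 - r) ^ 2) = 0 := by
      linear_combination 8 * h2 - 4 * (p - (4 - s)) ^ 2 * hr +
        (p - (4 - s)) ^ 2 * (r ^ 2 - 2 * p + s + 3) * hr
    simp only [mul_eq_zero, pow_eq_zero_iff two_ne_zero, sub_eq_zero] at hfactor
    rcases hfactor with (rfl | rfl) | rfl
    · exact Or.inl (Prod.ext rfl (by ring))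
    · exact Or.inr (Or.inl (Prod.ext rfl (by linear_combination (r ^ 2 - 1 + s) / 4 * hr)))
    · exact Or.inr (Or.inr (Prod.ext rfl (by linear_combination (r ^ 2 - 1 + s) / 4 * hr)))
  · have hplus : (1 + r) ^ 2 - 2 * (1 + r) = s := by linear_combination hr
    have hminus : (1 - r) ^ 2 - 2 * (1 - r) = s := by linear_combination hr
    rintro (h | h | h) <;> rw [h]
    · exact g2_four_sub s
    · rw [g2_sq_cube, hplus]
    · rw [g2_sq_cube, hminus]

lemma four_sub_notMem_cuspidalCubic {s : ℂ} (hs0 : s ≠ 0) (hs3 : s ≠ 3) :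
    ((4 : ℂ) - s, 8 - 3 * s) ∉ cuspidalCubic ℂ := by
  intro h
  have : s ^ 2 * (3 - s) = 0 := by simp only [mem_cuspidalCubic] at h; linear_combination h
  rcases mul_eq_zero.1 this with h | h
  · exact hs0 (pow_eq_zero_iff two_ne_zero |>.1 h)
  · exact hs3 (sub_eq_zero.1 h).symm

lemma g2_preimage_sq_cube_of_ne {s : ℂ} (hs0 : s ≠ 0) (hs1 : s ≠ -1) (hs3 : s ≠ 3) :
    (g2 ⁻¹' {(s ^ 2, s ^ 3)}).ncard = 3 ∧
      (g2 ⁻¹' {(s ^ 2, s ^ 3)} ∩ cuspidalCubic ℂ).ncard = 2 ∧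
      (g2 ⁻¹' {(s ^ 2, s ^ 3)} \ cuspidalCubic ℂ).ncard = 1 ∧
      g2 ⁻¹' {(s ^ 2, s ^ 3)} \ cuspidalCubic ℂ ⊆ {pq : ℂ × ℂ | 3 * pq.1 - pq.2 - 4 = 0} := by
  obtain ⟨r, hr⟩ := IsAlgClosed.exists_pow_nat_eq (1 + s) two_pos
  have hr0 : r ≠ 0 := by rintro rfl; exact hs1 (by linear_combination -hr)
  have hline := four_sub_notMem_cuspidalCubic hs0 hs3
  have hcusp : {((1 + r) ^ 2, (1 + r) ^ 3), ((1 - r) ^ 2, (1 - r) ^ 3)} ⊆ cuspidalCubic ℂ := by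
    rintro _ (rfl | rfl) <;> simp only [mem_cuspidalCubic] <;> ring
  have hpair : ((1 + r) ^ 2, (1 + r) ^ 3) ≠ ((1 - r) ^ 2, (1 - r) ^ 3) := fun h =>
    hr0 (by linear_combination (Prod.ext_iff.1 h).1 / 4)
  have hinter : g2 ⁻¹' {(s ^ 2, s ^ 3)} ∩ cuspidalCubic ℂ =
      {((1 + r) ^ 2, (1 + r) ^ 3), ((1 - r) ^ 2, (1 - r) ^ 3)} := by
    rw [g2_preimage_sq_cube hr, Set.insert_inter_of_notMem hline, Set.inter_eq_left.2 hcusp]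
  have hdiff : g2 ⁻¹' {(s ^ 2, s ^ 3)} \ cuspidalCubic ℂ = {(4 - s, 8 - 3 * s)} := by
    rw [g2_preimage_sq_cube hr, Set.insert_sdiff_of_notMem _ hline, Set.sdiff_eq_empty.2 hcusp,
      insert_empty_eq]
  refine ⟨?_, by rw [hinter, Set.ncard_pair hpair], by rw [hdiff, Set.ncard_singleton], ?_⟩
  · rw [g2_preimage_sq_cube hr, Set.ncard_insert_of_notMem (fun h => hline (hcusp h)),
      Set.ncard_pair hpair]
  · rw [hdiff, Set.singleton_subset_iff]; change 3 * (4 - s) - (8 - 3 * s) - 4 = 0; ring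

lemma ncard_g2_preimage_sq_cube_of_eq {s : ℂ} (hs : s = 0 ∨ s = -1 ∨ s = 3) :
    (g2 ⁻¹' {(s ^ 2, s ^ 3)}).ncard = 2 := by
  rcases hs with rfl | rfl | rfl
  · rw [g2_preimage_sq_cube (r := 1) (by norm_num)]
    norm_num
  · rw [g2_preimage_sq_cube (r := 0) (by norm_num)]
    norm_num
  · rw [g2_preimage_sq_cube (r := 2) (by norm_num)]
    norm_num

/-- Fibers of `g₂` over the cuspidal cubic `C_C = {p³ = q²}`:
(1) over a point of `C_C` away from `E = {(0,0), (1,−1), (9,27)}` the fiber has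
exactly 3 points, exactly two of which lie on `C_C`, the remaining one lying on
the line `3p − q − 4 = 0`; (2) over a point of `E` the fiber has exactly 2 points. -/
theorem g2_fibers_over_cuspidal_cubic :
    (∀ a b : ℂ, a ^ 3 = b ^ 2 →
      (a, b) ∉ ({((0 : ℂ), (0 : ℂ)), (1, -1), (9, 27)} : Set (ℂ × ℂ)) →
      (g2 ⁻¹' {(a, b)}).ncard = 3 ∧
      (g2 ⁻¹' {(a, b)} ∩ {pq : ℂ × ℂ | pq.1 ^ 3 = pq.2 ^ 2}).ncard = 2 ∧
      (g2 ⁻¹' {(a, b)} \ {pq : ℂ × ℂ | pq.1 ^ 3 = pq.2 ^ 2}).ncard = 1 ∧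
      (g2 ⁻¹' {(a, b)} \ {pq : ℂ × ℂ | pq.1 ^ 3 = pq.2 ^ 2})
        ⊆ {pq : ℂ × ℂ | 3 * pq.1 - pq.2 - 4 = 0}) ∧
    (∀ a b : ℂ,
      (a, b) ∈ ({((0 : ℂ), (0 : ℂ)), (1, -1), (9, 27)} : Set (ℂ × ℂ)) →
      (g2 ⁻¹' {(a, b)}).ncard = 2) := by
  refine ⟨fun a b hab hE => ?_, fun a b hE => ?_⟩
  · obtain ⟨s, rfl, rfl⟩ := exists_sq_eq_and_cube_eq hab
    refine g2_preimage_sq_cube_of_ne ?_ ?_ ?_ <;> rintro rfl <;> norm_num at hE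
  · simp only [Set.mem_insert_iff, Set.mem_singleton_iff] at hE
    obtain ⟨s, hs, hab⟩ : ∃ s : ℂ, (s = 0 ∨ s = -1 ∨ s = 3) ∧ (s ^ 2, s ^ 3) = (a, b) := by
      rcases hE with h | h | h <;> rw [h]
      exacts [⟨0, by norm_num⟩, ⟨-1, by norm_num⟩, ⟨3, by norm_num⟩]
    rw [← hab]
    exact ncard_g2_preimage_sq_cube_of_eq hs
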